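/- arXiv:2007.00185 — 3 statements merged into one kernel-verified Lean document; each statement's English description precedes it below -/
import Mathlib

section
/- Fix w ∈ 𝒲 and j ∈ {1,…,d}. The j-th coordinate β_j(w) is uniquely determined by the equation δ_Y(w) = ⟨β(w), δ_X(w)⟩ (i.e., β₀_j(w) = β₁_j(w) for all solutions β₀, β₁) if and only if δ_{X_j}(w) ≠ 0 and δ_{X_s}(w) = 0 for all s ≠ j. In that case β_j(w) = δ_Y(w)/δ_{X_j}(w). -/
open BigOperators

lemma aux_sum {d : ℕ} (δX γ : Fin d → ℝ) (j : Fin d)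
    (h0 : ∀ s, s ≠ j → δX s = 0) : ∑ i, γ i * δX i = γ j * δX j := by
  rw [Finset.sum_eq_single j]
  · intro b _ hb; rw [h0 b hb, mul_zero]
  · intro h; exact absurd (Finset.mem_univ j) h

/-- Proposition 2: `β_j(w)` is identified iff `δ_{X_j}(w) ≠ 0` and `δ_{X_s}(w) = 0` for
all `s ≠ j`, in which case `β_j(w) = δ_Y(w)/δ_{X_j}(w)`. -/
theorem stmt1 {d : ℕ} (δX : Fin d → ℝ) (δY : ℝ) (j : Fin d)
    (β : Fin d → ℝ) (hβ : ∑ i, β i * δX i = δY) :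
    ((∀ β₀ β₁ : Fin d → ℝ,
        ∑ i, β₀ i * δX i = δY → ∑ i, β₁ i * δX i = δY → β₀ j = β₁ j) ↔
      (δX j ≠ 0 ∧ ∀ s, s ≠ j → δX s = 0)) ∧
    ((δX j ≠ 0 ∧ ∀ s, s ≠ j → δX s = 0) → β j = δY / δX j) := by
  have part2 : (δX j ≠ 0 ∧ ∀ s, s ≠ j → δX s = 0) → β j = δY / δX j := by
    rintro ⟨hj, h0⟩
    have := aux_sum δX β j h0
    field_simp
    linarith [hβ]
  refine ⟨⟨fun hid => ?_, fun ⟨hj, h0⟩ β₀ β₁ h₀ h₁ => ?_⟩, part2⟩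
  · constructor
    · intro hj
      have h1 : ∑ i, (β i + if i = j then 1 else 0) * δX i = δY := by
        have : ∀ i, (β i + if i = j then 1 else 0) * δX i
            = β i * δX i + (if i = j then δX i else 0) := by
          intro i; split <;> ring
        simp only [this, Finset.sum_add_distrib, Finset.sum_ite_eq', Finset.mem_univ,
          if_true, hβ, hj, add_zero]
      have := hid β (fun i => β i + if i = j then 1 else 0) hβ h1
      simp at this
    · intro s hs
      by_contra hsne
      have h1 : ∑ i, (β i + (if i = j then δX s else 0) - (if i = s then δX j else 0)) * δX i
          = δY := by
        have : ∀ i, (β i + (if i = j then δX s else 0) - (if i = s then δX j else 0)) * δX i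
            = β i * δX i + (if i = j then δX s * δX i else 0)
              - (if i = s then δX j * δX i else 0) := by
          intro i; split <;> split <;> ring
        simp only [this, Finset.sum_sub_distrib, Finset.sum_add_distrib,
          Finset.sum_ite_eq', Finset.mem_univ, if_true, hβ]
        ring
      have := hid β _ hβ h1
      rw [if_neg (Ne.symm hs), if_pos rfl] at this
      apply hsne
      linarith
  · have e0 := aux_sum δX β₀ j h0
    have e1 := aux_sum δX β₁ j h0
    rw [h₀] at e0; rw [h₁] at e1
    exact mul_right_cancel₀ hj (e0.symm.trans e1)
end

section
/- Let W be a random variable with values in 𝒲, δ_X : 𝒲 → ℝ^d measurable and bounded, and ω : 𝒲 → ℝ^d measurable and bounded. Then E[⟨ω(W), n(W)⟩] = 0 for every bounded measurable n : 𝒲 → ℝ^d with ⟨n(w), δ_X(w)⟩ = 0 for all w, if and only if there exists a measurable scalar function a : 𝒲 → ℝ with ω(w) = a(w) δ_X(w) almost surely. -/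
/-!
If `ω = a δ_X` a.s., then `⟨ω, n⟩ = a ⟨δ_X, n⟩ = 0` a.s. Conversely, test against the
pointwise rejection `r = ω - (⟨ω, δ_X⟩ / ⟨δ_X, δ_X⟩) δ_X` of `ω` from `δ_X`: it is measurable,
orthogonal to `δ_X` and no longer than `ω`, hence bounded, so `0 = E⟨ω, r⟩ = E⟨r, r⟩`.
Thus `r(W) = 0` a.s., i.e. `ω(W)` is a.s. the multiple `⟨ω, δ_X⟩ / ⟨δ_X, δ_X⟩` of `δ_X(W)`
(at points where `δ_X = 0` the junk value `x / 0 = 0` makes `r = ω`, still orthogonal to `0`).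
-/

open BigOperators MeasureTheory

section DotProductSelf

variable {ι R : Type*} [Fintype ι] [Ring R] [LinearOrder R] [IsStrictOrderedRing R]

theorem dotProduct_self_nonneg (v : ι → R) : 0 ≤ v ⬝ᵥ v :=
  Finset.sum_nonneg fun i _ => mul_self_nonneg (v i)

theorem sq_le_dotProduct_self (v : ι → R) (i : ι) : v i ^ 2 ≤ v ⬝ᵥ v := by
  rw [sq]
  exact Finset.single_le_sum (f := fun j => v j * v j) (fun j _ => mul_self_nonneg _)
    (Finset.mem_univ i)

theorem dotProduct_self_le_of_abs_le {v : ι → R} {C : R} (hv : ∀ i, |v i| ≤ C) :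
    v ⬝ᵥ v ≤ Fintype.card ι * C ^ 2 := by
  calc v ⬝ᵥ v = ∑ i, |v i| ^ 2 := by simp [dotProduct, sq]
    _ ≤ ∑ _i : ι, C ^ 2 := by gcongr with i; exact hv i
    _ = Fintype.card ι * C ^ 2 := by simp

end DotProductSelf

section Rejection

variable {ι K : Type*} [Fintype ι] [Field K]

def projCoeff (v u : ι → K) : K := (v ⬝ᵥ u) / (u ⬝ᵥ u)

def rejection (v u : ι → K) : ι → K := v - projCoeff v u • u

theorem rejection_add_projCoeff_smul (v u : ι → K) :
    rejection v u + projCoeff v u • u = v :=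
  sub_add_cancel _ _

variable [LinearOrder K] [IsStrictOrderedRing K]

theorem rejection_dotProduct (v u : ι → K) : rejection v u ⬝ᵥ u = 0 := by
  by_cases hu : u = 0
  · simp [hu]
  · have huu : u ⬝ᵥ u ≠ 0 := dotProduct_self_eq_zero.not.mpr hu
    simp only [rejection, projCoeff, sub_dotProduct, smul_dotProduct, smul_eq_mul]
    field_simp
    ring

theorem dotProduct_rejection (v u : ι → K) :
    v ⬝ᵥ rejection v u = rejection v u ⬝ᵥ rejection v u := by
  nth_rewrite 1 [← rejection_add_projCoeff_smul v u]
  rw [add_dotProduct, smul_dotProduct, dotProduct_comm u, rejection_dotProduct, smul_zero,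
    add_zero]

theorem rejection_dotProduct_self_le (v u : ι → K) :
    rejection v u ⬝ᵥ rejection v u ≤ v ⬝ᵥ v := by
  have hu : u ⬝ᵥ rejection v u = 0 := by rw [dotProduct_comm, rejection_dotProduct]
  conv_rhs => rw [← rejection_add_projCoeff_smul v u]
  simp only [add_dotProduct, dotProduct_add, smul_dotProduct, dotProduct_smul, hu,
    rejection_dotProduct, smul_eq_mul]
  nlinarith [mul_nonneg (mul_self_nonneg (projCoeff v u)) (dotProduct_self_nonneg u)]

end Rejection

theorem Measurable.dotProduct {α ι : Type*} [MeasurableSpace α] [Fintype ι]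
    {f g : α → ι → ℝ} (hf : Measurable f) (hg : Measurable g) :
    Measurable fun x => f x ⬝ᵥ g x := by
  unfold _root_.dotProduct; fun_prop

theorem ae_eq_zero_of_integral_dotProduct_self_eq_zero {Ω ι : Type*} [MeasurableSpace Ω]
    [Fintype ι] {μ : Measure Ω} {f : Ω → ι → ℝ}
    (hf : Integrable (fun x => f x ⬝ᵥ f x) μ) (h : ∫ x, f x ⬝ᵥ f x ∂μ = 0) :
    ∀ᵐ x ∂μ, f x = 0 := by
  have hnonneg : 0 ≤ fun x => f x ⬝ᵥ f x := fun x => dotProduct_self_nonneg (f x)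
  filter_upwards [(integral_eq_zero_iff_of_nonneg hnonneg hf).mp h] with x hx
  exact dotProduct_self_eq_zero.mp hx

theorem stmt4_general {Ω 𝒲 : Type*} [MeasurableSpace Ω] [MeasurableSpace 𝒲]
    (μ : Measure Ω) [IsProbabilityMeasure μ] {d : ℕ}
    (W : Ω → 𝒲) (hW : Measurable W)
    (δX : 𝒲 → Fin d → ℝ) (hδX : Measurable δX)
    (ω : 𝒲 → Fin d → ℝ) (hω : Measurable ω) (Cω : ℝ) (hCω : ∀ w i, |ω w i| ≤ Cω) :
    (∀ n : 𝒲 → Fin d → ℝ, Measurable n → (∃ C, ∀ w i, |n w i| ≤ C) →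
        (∀ w, ∑ i, n w i * δX w i = 0) →
        ∫ x, (∑ i, ω (W x) i * n (W x) i) ∂μ = 0) ↔
      (∃ a : 𝒲 → ℝ, Measurable a ∧
        ∀ᵐ x ∂μ, ∀ i, ω (W x) i = a (W x) * δX (W x) i) := by
  constructor
  · intro h
    set r : 𝒲 → Fin d → ℝ := fun w => rejection (ω w) (δX w)
    have hr : Measurable r :=
      hω.sub (((hω.dotProduct hδX).div (hδX.dotProduct hδX)).smul hδX)
    have hr_le : ∀ w, r w ⬝ᵥ r w ≤ d * Cω ^ 2 := fun w =>
      (rejection_dotProduct_self_le _ _).trans <| by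
        simpa using dotProduct_self_le_of_abs_le (hCω w)
    have hr_bdd : ∀ w i, |r w i| ≤ √(d * Cω ^ 2) := fun w i =>
      Real.abs_le_sqrt ((sq_le_dotProduct_self _ i).trans (hr_le w))
    have hint : ∫ x, r (W x) ⬝ᵥ r (W x) ∂μ = 0 := by
      simp_rw [r, ← dotProduct_rejection]
      exact h r hr ⟨_, hr_bdd⟩ fun w => rejection_dotProduct _ _
    have hr_int : Integrable (fun x => r (W x) ⬝ᵥ r (W x)) μ :=
      .of_bound ((hr.dotProduct hr).comp hW).aestronglyMeasurable (d * Cω ^ 2) <|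
        ae_of_all _ fun x => (Real.norm_of_nonneg (dotProduct_self_nonneg _)).trans_le (hr_le _)
    refine ⟨fun w => projCoeff (ω w) (δX w),
      (hω.dotProduct hδX).div (hδX.dotProduct hδX), ?_⟩
    filter_upwards [ae_eq_zero_of_integral_dotProduct_self_eq_zero hr_int hint] with x hx i
    simpa [r, hx] using (congrFun (rejection_add_projCoeff_smul (ω (W x)) (δX (W x))) i).symm
  · rintro ⟨a, -, hae⟩ n - - horth
    refine integral_eq_zero_of_ae ?_
    filter_upwards [hae] with x hx
    have hωx : ω (W x) = a (W x) • δX (W x) := funext hx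
    change ω (W x) ⬝ᵥ n (W x) = 0
    rw [hωx, smul_dotProduct, dotProduct_comm]
    exact smul_eq_zero_of_right _ (horth (W x))

/-- Proposition 4: `E[⟨ω(W), n(W)⟩] = 0` for all bounded measurable `n` pointwise
orthogonal to `δ_X` iff `ω(w) = a(w) δ_X(w)` a.s. for some measurable scalar `a`. -/
theorem stmt4 {Ω 𝒲 : Type*} [MeasurableSpace Ω] [MeasurableSpace 𝒲]
    (μ : Measure Ω) [IsProbabilityMeasure μ] {d : ℕ}
    (W : Ω → 𝒲) (hW : Measurable W)
    (δX : 𝒲 → Fin d → ℝ) (hδX : Measurable δX)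
    (CX : ℝ) (hCX : ∀ w i, |δX w i| ≤ CX)
    (ω : 𝒲 → Fin d → ℝ) (hω : Measurable ω) (Cω : ℝ) (hCω : ∀ w i, |ω w i| ≤ Cω) :
    (∀ n : 𝒲 → Fin d → ℝ, Measurable n → (∃ C, ∀ w i, |n w i| ≤ C) →
        (∀ w, ∑ i, n w i * δX w i = 0) →
        ∫ x, (∑ i, ω (W x) i * n (W x) i) ∂μ = 0) ↔
      (∃ a : 𝒲 → ℝ, Measurable a ∧
        ∀ᵐ x ∂μ, ∀ i, ω (W x) i = a (W x) * δX (W x) i) :=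
  stmt4_general μ W hW δX hδX ω hω Cω hCω
end

section
/- Let W be a random variable, δ_X, β : 𝒲 → ℝ^d bounded measurable, Σ = E[δ_X(W)δ_X(W)'] positive definite, and δ_Y(w) = ⟨β(w), δ_X(w)⟩. Define β̄_W = Σ^{-1} E[δ_X(W) δ_Y(W)]. Then β̄_W = E[ω(W) β(W)] where ω(w) = Σ^{-1} δ_X(w) δ_X(w)', and E[ω(W)] = I_d; i.e., β̄_W is a matrix-weighted average of the conditional LATEs whose weights average to the identity. -/
open BigOperators MeasureTheory Matrix

/-- The identified TWLATE `β̄_W = Σ⁻¹ E[δ_X δ_Y]` is a matrix-weighted average of the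
conditional LATEs with weights `ω(w) = Σ⁻¹ δ_X(w) δ_X(w)'` averaging to the identity. -/
theorem stmt16 {Ω 𝒲 : Type*} [MeasurableSpace Ω] [MeasurableSpace 𝒲]
    (μ : Measure Ω) [IsProbabilityMeasure μ] {d : ℕ}
    (W : Ω → 𝒲) (hW : Measurable W)
    (δX : 𝒲 → Fin d → ℝ) (hδX : Measurable δX)
    (CX : ℝ) (hCX : ∀ w i, |δX w i| ≤ CX)
    (β : 𝒲 → Fin d → ℝ) (hβ : Measurable β)
    (Cβ : ℝ) (hCβ : ∀ w i, |β w i| ≤ Cβ)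
    (δY : 𝒲 → ℝ) (hδY : ∀ w, δY w = ∑ i, β w i * δX w i)
    (Sig : Matrix (Fin d) (Fin d) ℝ)
    (hSig : Sig = Matrix.of fun i k => ∫ x, δX (W x) i * δX (W x) k ∂μ)
    (hpd : Sig.PosDef)
    (ω : 𝒲 → Matrix (Fin d) (Fin d) ℝ)
    (hω : ∀ w, ω w = Sig⁻¹ * Matrix.vecMulVec (δX w) (δX w)) :
    (Sig⁻¹ *ᵥ fun i => ∫ x, δX (W x) i * δY (W x) ∂μ) =
      (fun i => ∫ x, (ω (W x) *ᵥ β (W x)) i ∂μ) ∧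
    Matrix.of (fun i k => ∫ x, ω (W x) i k ∂μ) = (1 : Matrix (Fin d) (Fin d) ℝ) := by
  classical
  have hinv : Sig⁻¹ * Sig = 1 :=
    Matrix.nonsing_inv_mul _ (isUnit_iff_ne_zero.mpr hpd.det_pos.ne')
  have hmX : ∀ j, Measurable fun x => δX (W x) j := fun j =>
    (measurable_pi_apply j).comp (hδX.comp hW)
  have hmβ : ∀ j, Measurable fun x => β (W x) j := fun j =>
    (measurable_pi_apply j).comp (hβ.comp hW)
  have hmY : Measurable fun x => δY (W x) := by
    have : (fun x => δY (W x)) = fun x => ∑ i, β (W x) i * δX (W x) i := by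
      funext x; exact hδY _
    rw [this]
    exact Finset.measurable_sum _ fun i _ => (hmβ i).mul (hmX i)
  have hbdY : ∀ w, |δY w| ≤ d * (Cβ * CX) := by
    intro w
    rw [hδY]
    calc |∑ i, β w i * δX w i| ≤ ∑ i, |β w i * δX w i| := Finset.abs_sum_le_sum_abs _ _
      _ ≤ ∑ _i : Fin d, Cβ * CX := by
          refine Finset.sum_le_sum fun i _ => ?_
          rw [abs_mul]
          exact mul_le_mul (hCβ w i) (hCX w i) (abs_nonneg _)
            ((abs_nonneg _).trans (hCβ w i))
      _ = d * (Cβ * CX) := by simp [Finset.sum_const]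
  have hint : ∀ (f : Ω → ℝ) (C : ℝ), Measurable f → (∀ x, |f x| ≤ C) →
      Integrable f μ := fun f C hm hb =>
    (integrable_const C).mono' hm.aestronglyMeasurable
      (ae_of_all _ fun x => by simpa [Real.norm_eq_abs] using hb x)
  have hintXX : ∀ j k, Integrable (fun x => δX (W x) j * δX (W x) k) μ := fun j k =>
    hint _ (CX * CX) ((hmX j).mul (hmX k)) fun x => by
      rw [abs_mul]
      exact mul_le_mul (hCX _ j) (hCX _ k) (abs_nonneg _)
        (le_trans (abs_nonneg (δX (W x) j)) (hCX (W x) j))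
  have hintXY : ∀ j, Integrable (fun x => δX (W x) j * δY (W x)) μ := fun j =>
    hint _ (CX * (d * (Cβ * CX))) ((hmX j).mul hmY) fun x => by
      rw [abs_mul]
      exact mul_le_mul (hCX _ j) (hbdY _) (abs_nonneg _)
        (le_trans (abs_nonneg (δX (W x) j)) (hCX (W x) j))
  constructor
  · funext i
    have hpt : ∀ x, (ω (W x) *ᵥ β (W x)) i
        = ∑ j, Sig⁻¹ i j * (δX (W x) j * δY (W x)) := by
      intro x
      rw [hω, ← Matrix.mulVec_mulVec, Matrix.mulVec, dotProduct]
      congr 1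
      funext j
      congr 1
      rw [Matrix.mulVec, dotProduct, hδY]
      simp [Matrix.vecMulVec_apply, Finset.mul_sum, mul_comm, mul_left_comm, mul_assoc]
    simp only [hpt]
    rw [integral_finset_sum _ fun j _ => (hintXY j).const_mul _]
    simp only [integral_const_mul]
    rfl
  · ext i k
    have hpt : ∀ x, ω (W x) i k = ∑ j, Sig⁻¹ i j * (δX (W x) j * δX (W x) k) := by
      intro x
      rw [hω]
      simp [Matrix.mul_apply, Matrix.vecMulVec_apply]
    simp only [Matrix.of_apply, hpt]
    rw [integral_finset_sum _ fun j _ => (hintXX j k).const_mul _]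
    simp only [integral_const_mul]
    have : ∑ j, Sig⁻¹ i j * ∫ x, δX (W x) j * δX (W x) k ∂μ = (Sig⁻¹ * Sig) i k := by
      rw [Matrix.mul_apply]
      congr 1
      funext j
      rw [hSig]
      rfl
    rw [this, hinv]
end
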